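/- arXiv:2208.10664 — 4 statements merged into one kernel-verified Lean document; each statement's English description precedes it below -/
import Mathlib

section
/- Let G be an n×n real symmetric positive definite matrix, P an n×n real symmetric positive semidefinite matrix, λ > 0, and H = G + λP. Then for every vector γ ∈ ℝⁿ, γᵀ (λP) H^{-1} G H^{-1} (λP) γ ≤ min( λ ‖G^{-1}‖₂ ‖P‖₂ , 1 ) · λ · γᵀ P γ. -/
open Matrix

/-- The operator norm of a real matrix induced by the Euclidean vector norm. -/
noncomputable def opNorm2 {m n : ℕ} (A : Matrix (Fin m) (Fin n) ℝ) : ℝ :=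
  ‖(Matrix.toEuclideanLin A).toContinuousLinearMap‖

/-- Quadratic form bound via the operator norm. -/
lemma quad_le_opNorm2 {n : ℕ} (A : Matrix (Fin n) (Fin n) ℝ) (x : Fin n → ℝ) :
    x ⬝ᵥ (A *ᵥ x) ≤ opNorm2 A * (x ⬝ᵥ x) := by
  set x' : EuclideanSpace ℝ (Fin n) := (WithLp.equiv 2 (Fin n → ℝ)).symm x with hx'
  have hAx : (Matrix.toEuclideanLin A).toContinuousLinearMap x'
      = (WithLp.equiv 2 (Fin n → ℝ)).symm (A *ᵥ x) := by
    simp [hx', Matrix.toEuclideanLin_apply]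
  have hinner : x ⬝ᵥ (A *ᵥ x)
      = inner (𝕜 := ℝ) x' ((WithLp.equiv 2 (Fin n → ℝ)).symm (A *ᵥ x)) := by
    simp [PiLp.inner_apply, hx', dotProduct, mul_comm]
  have hself : x ⬝ᵥ x = ‖x'‖ * ‖x'‖ := by
    have := real_inner_self_eq_norm_mul_norm x'
    rw [← this]
    rw [real_inner_self_eq_norm_sq, EuclideanSpace.norm_sq_eq]
    simp [hx', dotProduct, sq]
  rw [hinner, hself, ← hAx]
  calc inner (𝕜 := ℝ) x' ((Matrix.toEuclideanLin A).toContinuousLinearMap x')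
      ≤ ‖x'‖ * ‖(Matrix.toEuclideanLin A).toContinuousLinearMap x'‖ :=
        real_inner_le_norm _ _
    _ ≤ ‖x'‖ * (opNorm2 A * ‖x'‖) := by
        have := (Matrix.toEuclideanLin A).toContinuousLinearMap.le_opNorm x'
        have hn : (0:ℝ) ≤ ‖x'‖ := norm_nonneg _
        exact mul_le_mul_of_nonneg_left this hn
    _ = opNorm2 A * (‖x'‖ * ‖x'‖) := by ring

/-- Symmetric matrices can be moved across the dot product. -/
lemma dot_sym {n : ℕ} {A : Matrix (Fin n) (Fin n) ℝ} (hA : Aᵀ = A) (x y : Fin n → ℝ) :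
    x ⬝ᵥ (A *ᵥ y) = (A *ᵥ x) ⬝ᵥ y := by
  rw [Matrix.dotProduct_mulVec, ← Matrix.mulVec_transpose, hA]

open scoped MatrixOrder in
lemma psd_sqrt_exists {n : ℕ} {P : Matrix (Fin n) (Fin n) ℝ} (hP : P.PosSemidef) :
    ∃ S : Matrix (Fin n) (Fin n) ℝ, S.PosSemidef ∧ S * S = P :=
  ⟨CFC.sqrt P, (CFC.sqrt_nonneg P).posSemidef, CFC.sqrt_mul_sqrt_self P hP.nonneg⟩

/-- Bound on the shrinkage bias: with `H = G + λP`, for every `γ`,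
`γᵀ (λP) H⁻¹ G H⁻¹ (λP) γ ≤ min(λ ‖G⁻¹‖₂ ‖P‖₂, 1) · λ · γᵀ P γ`. -/
theorem stmt_3 {n : ℕ} (G P : Matrix (Fin n) (Fin n) ℝ)
    (hG : G.PosDef) (hP : P.PosSemidef) (lam : ℝ) (hlam : 0 < lam)
    (H : Matrix (Fin n) (Fin n) ℝ) (hH : H = G + lam • P)
    (γ : Fin n → ℝ) :
    γ ⬝ᵥ (((lam • P) * H⁻¹ * G * H⁻¹ * (lam • P)) *ᵥ γ) ≤
      min (lam * opNorm2 G⁻¹ * opNorm2 P) 1 * lam * (γ ⬝ᵥ (P *ᵥ γ)) := by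
  classical
  set Q : Matrix (Fin n) (Fin n) ℝ := lam • P with hQdef
  -- Q is positive semidefinite
  have hQ : Q.PosSemidef := by
    refine Matrix.PosSemidef.of_dotProduct_mulVec_nonneg ?_ (fun x => ?_)
    · rw [Matrix.IsHermitian, hQdef, Matrix.conjTranspose_smul, star_trivial, hP.1.eq]
    · have := hP.dotProduct_mulVec_nonneg x
      rw [hQdef, Matrix.smul_mulVec, dotProduct_smul]
      exact smul_nonneg hlam.le this
  have hHpd : H.PosDef := hH ▸ hG.add_posSemidef hQ
  -- symmetry facts (transposes)
  have hGsym : Gᵀ = G := by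
    rw [← Matrix.conjTranspose_eq_transpose_of_trivial, hG.1.eq]
  have hQsym : Qᵀ = Q := by
    rw [← Matrix.conjTranspose_eq_transpose_of_trivial, hQ.1.eq]
  have hHsym : Hᵀ = H := by
    rw [← Matrix.conjTranspose_eq_transpose_of_trivial, hHpd.1.eq]
  have hHinvsym : (H⁻¹)ᵀ = H⁻¹ := by
    rw [Matrix.transpose_nonsing_inv, hHsym]
  have hGinvsym : (G⁻¹)ᵀ = G⁻¹ := by
    rw [Matrix.transpose_nonsing_inv, hGsym]
  -- inverses
  have hHunit : IsUnit H.det := Matrix.isUnit_iff_isUnit_det _ |>.1 hHpd.isUnit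
  have hGunit : IsUnit G.det := Matrix.isUnit_iff_isUnit_det _ |>.1 hG.isUnit
  -- nonnegativity of quadratic forms
  have hQnn : ∀ x : Fin n → ℝ, 0 ≤ x ⬝ᵥ (Q *ᵥ x) := fun x => by
    have := hQ.dotProduct_mulVec_nonneg x; simpa using this
  have hGnn : ∀ x : Fin n → ℝ, 0 ≤ x ⬝ᵥ (G *ᵥ x) := fun x => by
    have := hG.posSemidef.dotProduct_mulVec_nonneg x; simpa using this
  -- notation
  set z : Fin n → ℝ := Q *ᵥ γ with hz
  set w : Fin n → ℝ := H⁻¹ *ᵥ z with hw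
  have hHw : H *ᵥ w = z := by
    rw [hw, Matrix.mulVec_mulVec, Matrix.mul_nonsing_inv _ hHunit, Matrix.one_mulVec]
  -- the LHS equals wᵀ G w
  have hLHS : γ ⬝ᵥ ((Q * H⁻¹ * G * H⁻¹ * Q) *ᵥ γ) = w ⬝ᵥ (G *ᵥ w) := by
    have : (Q * H⁻¹ * G * H⁻¹ * Q) *ᵥ γ
        = Q *ᵥ (H⁻¹ *ᵥ (G *ᵥ (H⁻¹ *ᵥ (Q *ᵥ γ)))) := by
      simp [Matrix.mulVec_mulVec, Matrix.mul_assoc]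
    rw [this, dot_sym hQsym, ← hz, dot_sym hHinvsym, ← hw]
  set a : ℝ := γ ⬝ᵥ z with ha
  set b : ℝ := w ⬝ᵥ z with hb
  -- wᵀGw + wᵀQw = b
  have hsplit : w ⬝ᵥ (G *ᵥ w) + w ⬝ᵥ (Q *ᵥ w) = b := by
    have : w ⬝ᵥ (H *ᵥ w) = b := by rw [hHw]
    rw [← this, hH, Matrix.add_mulVec, dotProduct_add]
  have hwGw_le_b : w ⬝ᵥ (G *ᵥ w) ≤ b := by
    have := hQnn w; linarith [hsplit]
  have hwQw_le_b : w ⬝ᵥ (Q *ᵥ w) ≤ b := by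
    have := hGnn w; linarith [hsplit]
  -- b ≤ a
  have hb_le_a : b ≤ a := by
    have h0 : 0 ≤ (γ - w) ⬝ᵥ (Q *ᵥ (γ - w)) := hQnn _
    have hexp : (γ - w) ⬝ᵥ (Q *ᵥ (γ - w))
        = a - 2 * b + w ⬝ᵥ (Q *ᵥ w) := by
      have h1 : γ ⬝ᵥ (Q *ᵥ w) = b := by
        rw [dot_sym hQsym, ← hz, hb, dotProduct_comm]
      have h2 : w ⬝ᵥ (Q *ᵥ γ) = b := by rw [← hz]
      rw [Matrix.mulVec_sub, dotProduct_sub, sub_dotProduct, sub_dotProduct]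
      rw [← hz] at *
      linarith [h1, h2]
    nlinarith [hwQw_le_b]
  -- b ≤ zᵀ G⁻¹ z
  set c' : ℝ := z ⬝ᵥ (G⁻¹ *ᵥ z) with hc'
  have hb_le_c' : b ≤ c' := by
    set v : Fin n → ℝ := G⁻¹ *ᵥ z with hv
    have hGv : G *ᵥ v = z := by
      rw [hv, Matrix.mulVec_mulVec, Matrix.mul_nonsing_inv _ hGunit, Matrix.one_mulVec]
    have h0 : 0 ≤ (w - v) ⬝ᵥ (G *ᵥ (w - v)) := hGnn _
    have hexp : (w - v) ⬝ᵥ (G *ᵥ (w - v))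
        = w ⬝ᵥ (G *ᵥ w) - 2 * b + c' := by
      have h1 : w ⬝ᵥ (G *ᵥ v) = b := by rw [hGv]
      have h2 : v ⬝ᵥ (G *ᵥ w) = b := by
        rw [dot_sym hGsym, hGv, dotProduct_comm]
      have h3 : v ⬝ᵥ (G *ᵥ v) = c' := by
        rw [hGv, hc', hv, dotProduct_comm]
      rw [Matrix.mulVec_sub, dotProduct_sub, sub_dotProduct, sub_dotProduct]
      linarith [h1, h2, h3]
    nlinarith [hwGw_le_b]
  -- zᵀ G⁻¹ z ≤ ‖G⁻¹‖ (zᵀz)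
  have hc'_le : c' ≤ opNorm2 G⁻¹ * (z ⬝ᵥ z) := quad_le_opNorm2 _ _
  -- zᵀ z = lam² (Pγ)ᵀ(Pγ)
  have hzz : z ⬝ᵥ z = lam ^ 2 * ((P *ᵥ γ) ⬝ᵥ (P *ᵥ γ)) := by
    rw [hz, hQdef, Matrix.smul_mulVec, smul_dotProduct, dotProduct_smul]
    simp [smul_eq_mul]; ring
  -- (Pγ)ᵀ(Pγ) ≤ ‖P‖ γᵀPγ via the square root of P
  have hPγ : (P *ᵥ γ) ⬝ᵥ (P *ᵥ γ) ≤ opNorm2 P * (γ ⬝ᵥ (P *ᵥ γ)) := by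
    obtain ⟨S, hSpsd, hSS'⟩ := psd_sqrt_exists hP
    have hSsym : Sᵀ = S := by
      rw [← Matrix.conjTranspose_eq_transpose_of_trivial, hSpsd.1.eq]
    have hSS : S * S = P := hSS'
    set u : Fin n → ℝ := S *ᵥ γ with hu
    have hPu : P *ᵥ γ = S *ᵥ u := by
      rw [hu, Matrix.mulVec_mulVec, hSS]
    have e1 : (P *ᵥ γ) ⬝ᵥ (P *ᵥ γ) = u ⬝ᵥ (P *ᵥ u) := by
      rw [hPu, ← dot_sym hSsym, Matrix.mulVec_mulVec, hSS]
    have e2 : u ⬝ᵥ u = γ ⬝ᵥ (P *ᵥ γ) := by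
      rw [hu, ← dot_sym hSsym, Matrix.mulVec_mulVec, hSS]
    rw [e1, ← e2]
    exact quad_le_opNorm2 _ _
  -- put everything together
  have ha_eq : a = lam * (γ ⬝ᵥ (P *ᵥ γ)) := by
    rw [ha, hz, hQdef, Matrix.smul_mulVec, dotProduct_smul, smul_eq_mul]
  have hPγnn : 0 ≤ γ ⬝ᵥ (P *ᵥ γ) := by
    have := hP.dotProduct_mulVec_nonneg γ; simpa using this
  have hnormG : 0 ≤ opNorm2 G⁻¹ := norm_nonneg _
  have hbound2 : w ⬝ᵥ (G *ᵥ w) ≤ (lam * opNorm2 G⁻¹ * opNorm2 P) * (lam * (γ ⬝ᵥ (P *ᵥ γ))) := by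
    have h1 : w ⬝ᵥ (G *ᵥ w) ≤ opNorm2 G⁻¹ * (z ⬝ᵥ z) :=
      le_trans hwGw_le_b (le_trans hb_le_c' hc'_le)
    have h2 : opNorm2 G⁻¹ * (z ⬝ᵥ z)
        ≤ opNorm2 G⁻¹ * (lam ^ 2 * (opNorm2 P * (γ ⬝ᵥ (P *ᵥ γ)))) := by
      rw [hzz]
      have : lam ^ 2 * ((P *ᵥ γ) ⬝ᵥ (P *ᵥ γ)) ≤ lam ^ 2 * (opNorm2 P * (γ ⬝ᵥ (P *ᵥ γ))) :=
        mul_le_mul_of_nonneg_left hPγ (sq_nonneg lam)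
      exact mul_le_mul_of_nonneg_left this hnormG
    calc w ⬝ᵥ (G *ᵥ w) ≤ opNorm2 G⁻¹ * (lam ^ 2 * (opNorm2 P * (γ ⬝ᵥ (P *ᵥ γ)))) :=
          le_trans h1 h2
      _ = (lam * opNorm2 G⁻¹ * opNorm2 P) * (lam * (γ ⬝ᵥ (P *ᵥ γ))) := by ring
  have hbound1 : w ⬝ᵥ (G *ᵥ w) ≤ lam * (γ ⬝ᵥ (P *ᵥ γ)) := by
    rw [← ha_eq]; exact le_trans hwGw_le_b hb_le_a
  rw [hLHS]
  rcases le_total (lam * opNorm2 G⁻¹ * opNorm2 P) 1 with h | h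
  · rw [min_eq_left h, mul_assoc]
    exact hbound2
  · rw [min_eq_right h, one_mul]
    exact hbound1
end

section
/- For all real constants c₁, c₂ with 0 < c₁ ≤ c₂ and every integer q ≥ 1, there exist a constant c > 0 and γ ∈ (0,1), depending only on c₁, c₂ and q, with the following property: for every integer K ≥ 1, every real h > 0, and every K×K real symmetric positive definite matrix G such that G_{ij} = 0 whenever |i − j| ≥ q and such that every eigenvalue of G lies in the interval [c₁ h / 2, 2 c₂ h], the entries g_{ij} of G^{-1} satisfy |g_{ij}| ≤ 2 (c / c₁) h^{-1} γ^{|i−j|} for all i, j. -/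
open Matrix

private lemma band_pow {K q : ℕ} (A : Matrix (Fin K) (Fin K) ℝ)
    (hA : ∀ i j : Fin K, (q : ℤ) ≤ |(i : ℤ) - (j : ℤ)| → A i j = 0) :
    ∀ n : ℕ, ∀ i j : Fin K, ((n * q : ℕ) : ℤ) < |(i : ℤ) - (j : ℤ)| → (A ^ n) i j = 0 := by
  intro n
  induction n with
  | zero =>
    intro i j hij
    have hne : i ≠ j := by
      rintro rfl; simp at hij
    simp [pow_zero, Matrix.one_apply_ne hne]
  | succ n ih =>
    intro i j hij
    rw [pow_succ, Matrix.mul_apply]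
    refine Finset.sum_eq_zero fun k _ => ?_
    by_cases hk : ((n * q : ℕ) : ℤ) < |(i : ℤ) - (k : ℤ)|
    · rw [ih i k hk, zero_mul]
    · push_neg at hk
      have htri : |(i : ℤ) - (j : ℤ)| ≤ |(i : ℤ) - (k : ℤ)| + |(k : ℤ) - (j : ℤ)| :=
        abs_sub_le _ _ _
      have hkj : (q : ℤ) ≤ |(k : ℤ) - (j : ℤ)| := by
        push_cast at hij hk ⊢
        linarith
      rw [hA k j hkj, mul_zero]

private lemma conj_entry_bound {K : ℕ} (U : Matrix (Fin K) (Fin K) ℝ)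
    (hU : U * Uᴴ = 1) (d : Fin K → ℝ) (M : ℝ) (hM0 : 0 ≤ M) (hM : ∀ k, |d k| ≤ M)
    (i j : Fin K) : |(U * diagonal d * Uᴴ) i j| ≤ M := by
  have hrow : ∀ a : Fin K, ∑ k, U a k ^ 2 = 1 := by
    intro a
    have := congrFun (congrFun hU a) a
    simpa [Matrix.mul_apply, Matrix.conjTranspose_apply, Matrix.one_apply, pow_two] using this
  have hentry : (U * diagonal d * Uᴴ) i j = ∑ k, U i k * d k * U j k := by
    simp only [Matrix.mul_apply, Matrix.conjTranspose_apply, Matrix.diagonal_apply, star_trivial,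
      mul_ite, mul_zero, Finset.sum_ite_eq, Finset.sum_ite_eq', Finset.mem_univ, if_true]
  have hCS : ∑ k, |U i k| * |U j k| ≤ 1 := by
    have h1 := Finset.sum_mul_sq_le_sq_mul_sq Finset.univ (fun k => |U i k|) (fun k => |U j k|)
    simp only [sq_abs] at h1
    rw [hrow i, hrow j, mul_one] at h1
    nlinarith [Finset.sum_nonneg (fun k (_ : k ∈ Finset.univ) => mul_nonneg (abs_nonneg (U i k)) (abs_nonneg (U j k)))]
  calc |(U * diagonal d * Uᴴ) i j| = |∑ k, U i k * d k * U j k| := by rw [hentry]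
    _ ≤ ∑ k, |U i k * d k * U j k| := Finset.abs_sum_le_sum_abs _ _
    _ = ∑ k, |d k| * (|U i k| * |U j k|) := by
        refine Finset.sum_congr rfl fun k _ => ?_
        rw [abs_mul, abs_mul]; ring
    _ ≤ ∑ k, M * (|U i k| * |U j k|) := by
        refine Finset.sum_le_sum fun k _ => ?_
        exact mul_le_mul_of_nonneg_right (hM k) (mul_nonneg (abs_nonneg _) (abs_nonneg _))
    _ = M * ∑ k, |U i k| * |U j k| := by rw [Finset.mul_sum]
    _ ≤ M * 1 := mul_le_mul_of_nonneg_left hCS hM0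
    _ = M := mul_one M

private lemma conj_diag_mul {K : ℕ} (U : Matrix (Fin K) (Fin K) ℝ) (hU' : Uᴴ * U = 1)
    (d e : Fin K → ℝ) :
    (U * diagonal d * Uᴴ) * (U * diagonal e * Uᴴ) = U * diagonal (fun k => d k * e k) * Uᴴ := by
  have h1 : (U * diagonal d * Uᴴ) * (U * diagonal e * Uᴴ)
      = U * (diagonal d * ((Uᴴ * U) * (diagonal e * Uᴴ))) := by
    simp only [Matrix.mul_assoc]
  rw [h1, hU', one_mul, ← Matrix.mul_assoc (diagonal d), Matrix.diagonal_mul_diagonal,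
    ← Matrix.mul_assoc]

private lemma conj_diag_pow {K : ℕ} (U : Matrix (Fin K) (Fin K) ℝ)
    (hU : U * Uᴴ = 1) (hU' : Uᴴ * U = 1) (d : Fin K → ℝ) (n : ℕ) :
    (U * diagonal d * Uᴴ) ^ n = U * diagonal (fun k => d k ^ n) * Uᴴ := by
  induction n with
  | zero =>
    simp only [pow_zero]
    rw [show (diagonal fun _ : Fin K => (1 : ℝ)) = 1 from Matrix.diagonal_one,
      Matrix.mul_one, hU]
  | succ n ih =>
    rw [pow_succ, ih, conj_diag_mul U hU' _ _]
    simp only [pow_succ]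

private lemma ceil_div_facts (d q : ℕ) (hq : 1 ≤ q) :
    d ≤ ((d + q - 1) / q) * q ∧ ∀ n < (d + q - 1) / q, n * q < d := by
  obtain ⟨q', rfl⟩ : ∃ q', q = q' + 1 := ⟨q - 1, by omega⟩
  have h1 : (q' + 1) * ((d + q') / (q' + 1)) + (d + q') % (q' + 1) = d + q' := by
    have := Nat.div_add_mod (d + q') (q' + 1)
    omega
  have h2 : (d + q') % (q' + 1) < q' + 1 := Nat.mod_lt _ (by omega)
  have heq : d + (q' + 1) - 1 = d + q' := by omega
  rw [heq]
  set m := (d + q') / (q' + 1) with hm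
  constructor
  · nlinarith [h1, h2]
  · intro n hn
    have hmul : (n + 1) * (q' + 1) ≤ m * (q' + 1) := Nat.mul_le_mul_right _ hn
    have h0 : 0 ≤ (d + q') % (q' + 1) := Nat.zero_le _
    zify at h0 h1 h2 hmul ⊢
    nlinarith [h0, h1, h2, hmul]

/-- Lemma 3 of the paper: exponential entrywise decay of the inverse of a banded
symmetric positive definite matrix whose eigenvalues lie in `[c₁h/2, 2c₂h]`. -/
theorem stmt_6 (c₁ c₂ : ℝ) (hc₁ : 0 < c₁) (hc : c₁ ≤ c₂) (q : ℕ) (hq : 1 ≤ q) :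
    ∃ c : ℝ, 0 < c ∧ ∃ γ : ℝ, γ ∈ Set.Ioo (0 : ℝ) 1 ∧
      ∀ K : ℕ, 1 ≤ K → ∀ h : ℝ, 0 < h →
        ∀ G : Matrix (Fin K) (Fin K) ℝ, G.PosDef →
          (∀ i j : Fin K, (q : ℤ) ≤ |(i : ℤ) - (j : ℤ)| → G i j = 0) →
          (∀ μ ∈ spectrum ℝ G, μ ∈ Set.Icc (c₁ * h / 2) (2 * c₂ * h)) →
          ∀ i j : Fin K,
            |G⁻¹ i j| ≤ 2 * (c / c₁) * h⁻¹ * γ ^ ((i : ℤ) - (j : ℤ)).natAbs := by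
  classical
  have hc₂ : 0 < c₂ := lt_of_lt_of_le hc₁ hc
  set ρ : ℝ := (4 * c₂ - c₁) / (4 * c₂ + c₁) with hρdef
  have hden : 0 < 4 * c₂ + c₁ := by linarith
  have hρ0 : 0 < ρ := div_pos (by linarith) hden
  have hρ1 : ρ < 1 := (div_lt_one hden).2 (by linarith)
  have hq0 : (0 : ℝ) < q := by exact_mod_cast hq
  refine ⟨1, one_pos, ρ ^ (1 / (q : ℝ)),
    ⟨Real.rpow_pos_of_pos hρ0 _, Real.rpow_lt_one hρ0.le hρ1 (by positivity)⟩, ?_⟩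
  intro K hK h hh G hG hband hspec i j
  set γ : ℝ := ρ ^ (1 / (q : ℝ)) with hγdef
  have hherm : G.IsHermitian := hG.1
  set U : Matrix (Fin K) (Fin K) ℝ := (hherm.eigenvectorUnitary : Matrix (Fin K) (Fin K) ℝ)
    with hUdef
  set μ : Fin K → ℝ := hherm.eigenvalues with hμdef
  obtain ⟨hU'mem, hUmem⟩ := Unitary.mem_iff.mp hherm.eigenvectorUnitary.2
  have hU : U * Uᴴ = 1 := by
    simpa [Matrix.star_eq_conjTranspose] using hUmem
  have hU' : Uᴴ * U = 1 := by
    simpa [Matrix.star_eq_conjTranspose] using hU'mem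
  have hGspec : G = U * diagonal μ * Uᴴ := by
    have := hherm.spectral_theorem
    simpa [Matrix.star_eq_conjTranspose, RCLike.ofReal_real_eq_id] using this
  have hμmem : ∀ k, μ k ∈ Set.Icc (c₁ * h / 2) (2 * c₂ * h) :=
    fun k => hspec _ (hherm.eigenvalues_mem_spectrum_real k)
  have hμpos : ∀ k, 0 < μ k := fun k => lt_of_lt_of_le (by positivity) (hμmem k).1
  set t : ℝ := 4 / ((c₁ + 4 * c₂) * h) with htdef
  have hth : 0 < (c₁ + 4 * c₂) * h := by positivity
  have hfk_bound : ∀ k, |1 - t * μ k| ≤ ρ := by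
    intro k
    obtain ⟨h1, h2⟩ := hμmem k
    have hub : t * μ k ≤ 8 * c₂ / (c₁ + 4 * c₂) := by
      have : t * μ k ≤ t * (2 * c₂ * h) :=
        mul_le_mul_of_nonneg_left h2 (by positivity)
      have heq : t * (2 * c₂ * h) = 8 * c₂ / (c₁ + 4 * c₂) := by
        rw [htdef]; field_simp; ring
      linarith
    have hlb : 2 * c₁ / (c₁ + 4 * c₂) ≤ t * μ k := by
      have : t * (c₁ * h / 2) ≤ t * μ k :=
        mul_le_mul_of_nonneg_left h1 (by positivity)
      have heq : t * (c₁ * h / 2) = 2 * c₁ / (c₁ + 4 * c₂) := by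
        rw [htdef]; field_simp; ring
      linarith
    rw [abs_le, hρdef]
    have e1 : 8 * c₂ / (c₁ + 4 * c₂) = 1 + (4 * c₂ - c₁) / (4 * c₂ + c₁) := by
      field_simp; ring
    have e2 : 2 * c₁ / (c₁ + 4 * c₂) = 1 - (4 * c₂ - c₁) / (4 * c₂ + c₁) := by
      field_simp; ring
    constructor <;> linarith
  have hdet : IsUnit G.det := hG.det_pos.ne'.isUnit
  have hGinv : G⁻¹ = U * diagonal (fun k => (μ k)⁻¹) * Uᴴ := by
    apply Matrix.inv_eq_right_inv
    calc G * (U * diagonal (fun k => (μ k)⁻¹) * Uᴴ)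
        = (U * diagonal μ * Uᴴ) * (U * diagonal (fun k => (μ k)⁻¹) * Uᴴ) := by rw [← hGspec]
      _ = U * diagonal (fun k => μ k * (μ k)⁻¹) * Uᴴ := conj_diag_mul U hU' _ _
      _ = U * diagonal (fun _ : Fin K => (1 : ℝ)) * Uᴴ := by
          rw [show (fun k => μ k * (μ k)⁻¹) = fun _ : Fin K => (1 : ℝ) from
            funext fun k => mul_inv_cancel₀ (hμpos k).ne']
      _ = 1 := by rw [Matrix.diagonal_one, Matrix.mul_one, hU]
  set d : ℕ := ((i : ℤ) - (j : ℤ)).natAbs with hd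
  set N : ℕ := (d + q - 1) / q with hN
  obtain ⟨hdN, hlt⟩ := ceil_div_facts d q hq
  set B : Matrix (Fin K) (Fin K) ℝ := (1 : Matrix (Fin K) (Fin K) ℝ) - t • G with hB
  have hBband : ∀ i' j' : Fin K, (q : ℤ) ≤ |(i' : ℤ) - (j' : ℤ)| → B i' j' = 0 := by
    intro i' j' hij
    have hne : i' ≠ j' := by
      rintro rfl
      simp at hij
      omega
    simp [hB, Matrix.sub_apply, Matrix.smul_apply, Matrix.one_apply_ne hne, hband i' j' hij]
  have hGGinv : G * G⁻¹ = 1 := Matrix.mul_nonsing_inv G hdet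
  have hkey : G⁻¹ i j = (B ^ N * G⁻¹) i j := by
    have hgeom := geom_sum_mul B N
    have hB1 : B - 1 = -(t • G) := by rw [hB]; abel
    rw [hB1, mul_neg, Matrix.mul_smul] at hgeom
    have h2 : t • ((∑ n ∈ Finset.range N, B ^ n) * G) = 1 - B ^ N := by
      calc t • ((∑ n ∈ Finset.range N, B ^ n) * G)
          = -(-(t • ((∑ n ∈ Finset.range N, B ^ n) * G))) := (neg_neg _).symm
        _ = -(B ^ N - 1) := by rw [hgeom]
        _ = 1 - B ^ N := neg_sub _ _
    have h3 : t • (∑ n ∈ Finset.range N, B ^ n) = G⁻¹ - B ^ N * G⁻¹ := by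
      have := congrArg (fun M => M * G⁻¹) h2
      rw [Matrix.smul_mul, Matrix.mul_assoc, hGGinv, Matrix.mul_one] at this
      rw [this, Matrix.sub_mul, Matrix.one_mul]
    have h4 : (t • (∑ n ∈ Finset.range N, B ^ n)) i j = 0 := by
      rw [Matrix.smul_apply, Matrix.sum_apply]
      rw [Finset.sum_eq_zero, smul_zero]
      intro n hn
      apply band_pow B hBband n i j
      have h5 : n * q < d := hlt n (Finset.mem_range.mp hn)
      have h6 : |(i : ℤ) - (j : ℤ)| = (d : ℤ) := by rw [hd]; exact Int.abs_eq_natAbs _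
      rw [h6]
      exact_mod_cast h5
    have h7 := congrFun (congrFun h3 i) j
    rw [h4] at h7
    have h8 : (0 : ℝ) = G⁻¹ i j - (B ^ N * G⁻¹) i j := by
      rw [h7]; simp [Matrix.sub_apply]
    linarith
  have hdiagsub : diagonal (fun k => 1 - t * μ k)
      = (1 : Matrix (Fin K) (Fin K) ℝ) - t • diagonal μ := by
    ext a b
    by_cases hab : a = b
    · subst hab
      simp [Matrix.diagonal_apply_eq, Matrix.one_apply_eq, Matrix.smul_apply]
    · simp [Matrix.diagonal_apply_ne _ hab, Matrix.one_apply_ne hab, Matrix.smul_apply]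
  have hBspec : B = U * diagonal (fun k => 1 - t * μ k) * Uᴴ := by
    rw [hdiagsub, Matrix.mul_sub, Matrix.sub_mul, Matrix.mul_one, hU]
    rw [Matrix.mul_smul, Matrix.smul_mul, ← hGspec, hB]
  have hfinal : B ^ N * G⁻¹ = U * diagonal (fun k => (1 - t * μ k) ^ N * (μ k)⁻¹) * Uᴴ := by
    rw [hBspec, conj_diag_pow U hU hU', hGinv, conj_diag_mul U hU']
  have hγd0 : 0 ≤ γ ^ d := by positivity
  have hpow : ρ ^ N ≤ γ ^ d := by
    have h1 : γ ^ d = ρ ^ ((d : ℝ) * (1 / (q : ℝ))) := by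
      rw [hγdef, ← Real.rpow_natCast (ρ ^ (1 / (q : ℝ))) d, ← Real.rpow_mul hρ0.le]
      ring_nf
    have h2 : ρ ^ N = ρ ^ ((N : ℝ)) := (Real.rpow_natCast ρ N).symm
    rw [h1, h2]
    apply Real.rpow_le_rpow_of_exponent_ge hρ0 hρ1.le
    rw [mul_one_div, div_le_iff₀ hq0]
    exact_mod_cast hdN
  have hMbound : ∀ k, |(1 - t * μ k) ^ N * (μ k)⁻¹| ≤ 2 / (c₁ * h) * γ ^ d := by
    intro k
    rw [abs_mul, abs_pow]
    have hinv : |(μ k)⁻¹| ≤ 2 / (c₁ * h) := by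
      rw [abs_of_pos (inv_pos.mpr (hμpos k))]
      have h1 : c₁ * h / 2 ≤ μ k := (hμmem k).1
      have h2 : (μ k)⁻¹ ≤ (c₁ * h / 2)⁻¹ := by
        apply inv_anti₀ (by positivity) h1
      have h3 : (c₁ * h / 2)⁻¹ = 2 / (c₁ * h) := by
        field_simp
      linarith
    have hpk : |1 - t * μ k| ^ N ≤ ρ ^ N := pow_le_pow_left₀ (abs_nonneg _) (hfk_bound k) N
    calc |1 - t * μ k| ^ N * |(μ k)⁻¹| ≤ ρ ^ N * (2 / (c₁ * h)) := by
          apply mul_le_mul hpk hinv (abs_nonneg _) (by positivity)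
      _ ≤ γ ^ d * (2 / (c₁ * h)) := by
          apply mul_le_mul_of_nonneg_right hpow (by positivity)
      _ = 2 / (c₁ * h) * γ ^ d := by ring
  have hbound := conj_entry_bound U hU _ (2 / (c₁ * h) * γ ^ d) (by positivity) hMbound i j
  rw [hkey, hfinal]
  calc |(U * diagonal (fun k => (1 - t * μ k) ^ N * (μ k)⁻¹) * Uᴴ) i j|
      ≤ 2 / (c₁ * h) * γ ^ d := hbound
    _ = 2 * (1 / c₁) * h⁻¹ * γ ^ d := by
        rw [div_eq_mul_inv, mul_inv]
        ring
end

section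
/- For all real constants c₁, c₂ with 0 < c₁ ≤ c₂ and every integer q ≥ 1, there exists a constant C > 0, depending only on c₁, c₂ and q, with the following property: for every integer K ≥ 1, every real h > 0, and every K×K real symmetric positive definite matrix G such that G_{ij} = 0 whenever |i − j| ≥ q and such that every eigenvalue of G lies in [c₁ h / 2, 2 c₂ h], one has ‖G^{-1}‖_∞ ≤ C h^{-1}. -/
open Matrix

/-- The maximum absolute row sum norm `‖A‖_∞ = max_i Σ_j |a_{ij}|` of a real matrix. -/
noncomputable def rowSumNorm {m n : ℕ} (A : Matrix (Fin m) (Fin n) ℝ) : ℝ :=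
  ⨆ i, ∑ j, |A i j|

section Stmt7Aux

/-- Entry bound for `U D U*` with orthogonal `U` and bounded diagonal. -/
private lemma stmt7_entry_bound {K : ℕ} (U : Matrix (Fin K) (Fin K) ℝ)
    (hU : U * star U = 1) (g : Fin K → ℝ) {ρ : ℝ} (hρ : 0 ≤ ρ)
    (hg : ∀ l, |g l| ≤ ρ) (i j : Fin K) :
    |(U * diagonal g * star U) i j| ≤ ρ := by
  have hrow : ∀ a : Fin K, ∑ l, (U a l)^2 = 1 := by
    intro a
    have h := congrFun (congrFun hU a) a
    simp [Matrix.mul_apply, Matrix.one_apply, Matrix.star_apply] at h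
    simpa [pow_two] using h
  have hentry : (U * diagonal g * star U) i j = ∑ l, U i l * g l * U j l := by
    rw [Matrix.mul_apply]
    refine Finset.sum_congr rfl fun l _ => ?_
    rw [Matrix.mul_diagonal, Matrix.star_apply, star_trivial]
  have hcs : ∑ l, |U i l| * |U j l| ≤ 1 := by
    have h2 := Finset.sum_mul_sq_le_sq_mul_sq Finset.univ (fun l => |U i l|) (fun l => |U j l|)
    have e1 : ∑ l, |U i l|^2 = 1 := by simpa [sq_abs] using hrow i
    have e2 : ∑ l, |U j l|^2 = 1 := by simpa [sq_abs] using hrow j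
    rw [e1, e2] at h2
    have hnn : (0:ℝ) ≤ ∑ l, |U i l| * |U j l| :=
      Finset.sum_nonneg fun l _ => mul_nonneg (abs_nonneg _) (abs_nonneg _)
    nlinarith
  calc |(U * diagonal g * star U) i j| ≤ ∑ l, |U i l * g l * U j l| := by
        rw [hentry]; exact Finset.abs_sum_le_sum_abs _ _
    _ = ∑ l, |g l| * (|U i l| * |U j l|) := by
        refine Finset.sum_congr rfl fun l _ => ?_
        rw [abs_mul, abs_mul]; ring
    _ ≤ ∑ l, ρ * (|U i l| * |U j l|) := by
        refine Finset.sum_le_sum fun l _ => ?_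
        exact mul_le_mul_of_nonneg_right (hg l) (mul_nonneg (abs_nonneg _) (abs_nonneg _))
    _ = ρ * ∑ l, |U i l| * |U j l| := by rw [Finset.mul_sum]
    _ ≤ ρ * 1 := mul_le_mul_of_nonneg_left hcs hρ
    _ = ρ := mul_one ρ

/-- Diagonalization of powers of `1 - α • G` for Hermitian `G`. -/
private lemma stmt7_pow_diag {K : ℕ} (G : Matrix (Fin K) (Fin K) ℝ) (hG : G.IsHermitian)
    (α : ℝ) : ∀ k : ℕ, (1 - α • G) ^ k =
      (hG.eigenvectorUnitary : Matrix (Fin K) (Fin K) ℝ) *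
        diagonal (fun l => (1 - α * hG.eigenvalues l) ^ k) *
        star (hG.eigenvectorUnitary : Matrix (Fin K) (Fin K) ℝ) := by
  set U : Matrix (Fin K) (Fin K) ℝ := (hG.eigenvectorUnitary : Matrix (Fin K) (Fin K) ℝ) with hUdef
  have hU1 : U * star U = 1 := (Matrix.mem_unitaryGroup_iff).mp hG.eigenvectorUnitary.2
  have hU2 : star U * U = 1 := (Matrix.mem_unitaryGroup_iff').mp hG.eigenvectorUnitary.2
  have hGspec : G = U * diagonal hG.eigenvalues * star U := by
    have := hG.spectral_theorem
    simpa [RCLike.ofReal_real_eq_id] using this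
  have hB : (1 : Matrix (Fin K) (Fin K) ℝ) - α • G
      = U * diagonal (fun l => 1 - α * hG.eigenvalues l) * star U := by
    have hd : diagonal (fun l : Fin K => 1 - α * hG.eigenvalues l)
        = 1 - α • diagonal hG.eigenvalues := by
      rw [← Matrix.diagonal_one, ← Matrix.diagonal_smul, ← Matrix.diagonal_sub]
      rfl
    rw [hd, Matrix.mul_sub, Matrix.sub_mul, Matrix.mul_one, hU1]
    congr 1
    rw [Matrix.mul_smul, Matrix.smul_mul, ← hGspec]
  intro k
  induction k with
  | zero =>
      simp only [pow_zero, pow_zero]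
      have hdone : diagonal (fun _ : Fin K => (1:ℝ)) = 1 := Matrix.diagonal_one
      rw [hdone, Matrix.mul_one, hU1]
  | succ k ih =>
      conv_lhs => rw [pow_succ, ih, hB]
      have hassoc : U * diagonal (fun l => (1 - α * hG.eigenvalues l) ^ k) * star U *
          (U * diagonal (fun l => 1 - α * hG.eigenvalues l) * star U)
        = U * (diagonal (fun l => (1 - α * hG.eigenvalues l) ^ k) * (star U * U) *
            diagonal (fun l => 1 - α * hG.eigenvalues l)) * star U := by
          simp only [Matrix.mul_assoc]
      rw [hassoc, hU2, Matrix.mul_one, Matrix.diagonal_mul_diagonal]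
      simp [pow_succ]

/-- Powers of a banded matrix are banded. -/
private lemma stmt7_band {K q : ℕ} (hq : 1 ≤ q) (B : Matrix (Fin K) (Fin K) ℝ)
    (hB : ∀ i j : Fin K, (q:ℤ) ≤ |(i:ℤ) - (j:ℤ)| → B i j = 0) :
    ∀ k : ℕ, ∀ i j : Fin K, ((k*(q-1) : ℕ) : ℤ) < |(i:ℤ) - (j:ℤ)| → (B ^ k) i j = 0 := by
  intro k
  induction k with
  | zero =>
      intro i j hij
      have hne : i ≠ j := by
        intro e; subst e; simp at hij
      simp [Matrix.one_apply_ne hne]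
  | succ k ih =>
      intro i j hij
      rw [pow_succ, Matrix.mul_apply]
      refine Finset.sum_eq_zero fun l _ => ?_
      by_cases hl : ((k*(q-1):ℕ):ℤ) < |(i:ℤ)-(l:ℤ)|
      · rw [ih i l hl, zero_mul]
      · push_neg at hl
        have htri : |(i:ℤ)-(j:ℤ)| ≤ |(i:ℤ)-(l:ℤ)| + |(l:ℤ)-(j:ℤ)| := abs_sub_le _ _ _
        have hq' : (q:ℤ) ≤ |(l:ℤ)-(j:ℤ)| := by
          have e1 : (((k+1)*(q-1):ℕ):ℤ) = ((k:ℤ)+1)*((q:ℤ)-1) := by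
            push_cast [Nat.cast_sub hq]; ring
          have e2 : ((k*(q-1):ℕ):ℤ) = (k:ℤ)*((q:ℤ)-1) := by
            push_cast [Nat.cast_sub hq]; ring
          rw [e1] at hij; rw [e2] at hl
          have e3 : ((k:ℤ)+1)*((q:ℤ)-1) = (k:ℤ)*((q:ℤ)-1) + ((q:ℤ)-1) := by ring
          have h3 : ((q:ℤ) - 1) < |(l:ℤ)-(j:ℤ)| := by linarith
          have h4 := Int.lt_iff_add_one_le.mp h3
          linarith
        rw [hB l j hq', mul_zero]

/-- At most `2r+1` indices lie within distance `r` of `i`. -/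
private lemma stmt7_card {K : ℕ} (i : Fin K) (r : ℕ) :
    ((Finset.univ.filter (fun j : Fin K => |(i:ℤ) - (j:ℤ)| ≤ (r:ℤ))).card : ℝ) ≤ 2*r+1 := by
  have h : (Finset.univ.filter (fun j : Fin K => |(i:ℤ) - (j:ℤ)| ≤ (r:ℤ))).card
      ≤ (Finset.Icc ((i:ℤ)-r) ((i:ℤ)+r)).card := by
    apply Finset.card_le_card_of_injOn (fun j : Fin K => (j:ℤ))
    · intro j hj
      simp only [Finset.mem_coe, Finset.mem_filter] at hj
      rcases abs_le.mp hj.2 with ⟨h1, h2⟩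
      simp only [Finset.mem_coe, Finset.mem_Icc]; omega
    · intro a _ b _ hab
      simp only at hab
      exact Fin.ext (by exact_mod_cast hab)
  rw [Int.card_Icc] at h
  have h2 : ((i:ℤ)+r+1-((i:ℤ)-r)).toNat = 2*r+1 := by omega
  rw [h2] at h
  exact_mod_cast h

end Stmt7Aux

/-- `‖G⁻¹‖_∞ = O(h⁻¹)` for a banded symmetric positive definite matrix whose
eigenvalues lie in `[c₁h/2, 2c₂h]` (conclusion of Lemma 3 of the paper). -/
theorem stmt_7 (c₁ c₂ : ℝ) (hc₁ : 0 < c₁) (hc : c₁ ≤ c₂) (q : ℕ) (hq : 1 ≤ q) :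
    ∃ C : ℝ, 0 < C ∧
      ∀ K : ℕ, 1 ≤ K → ∀ h : ℝ, 0 < h →
        ∀ G : Matrix (Fin K) (Fin K) ℝ, G.PosDef →
          (∀ i j : Fin K, (q : ℤ) ≤ |(i : ℤ) - (j : ℤ)| → G i j = 0) →
          (∀ μ ∈ spectrum ℝ G, μ ∈ Set.Icc (c₁ * h / 2) (2 * c₂ * h)) →
          rowSumNorm G⁻¹ ≤ C * h⁻¹ := by
  set ρ : ℝ := (4*c₂ - c₁)/(4*c₂ + c₁) with hρdef
  have hden : (0:ℝ) < 4*c₂ + c₁ := by linarith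
  have hρ0 : 0 ≤ ρ := div_nonneg (by linarith) hden.le
  have hρ1 : ρ < 1 := by rw [hρdef, div_lt_one hden]; linarith
  have hSumm : Summable (fun k : ℕ => (2*(q:ℝ)*k+1)*ρ^k) := by
    have h2 : (fun k : ℕ => (2*(q:ℝ)*k+1)*ρ^k)
        = fun k : ℕ => (2*(q:ℝ))*((k:ℝ)^1*ρ^k) + ρ^k := by funext k; ring
    rw [h2]
    exact ((summable_pow_mul_geometric_of_norm_lt_one (R := ℝ) (r := ρ) 1
      (by rwa [Real.norm_eq_abs, abs_of_nonneg hρ0])).mul_left _).add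
      (summable_geometric_of_lt_one hρ0 hρ1)
  set Cs : ℝ := ∑' k : ℕ, (2*(q:ℝ)*k+1)*ρ^k with hCsdef
  have hterm_nonneg : ∀ k : ℕ, 0 ≤ (2*(q:ℝ)*k+1)*ρ^k := fun k =>
    mul_nonneg (by positivity) (pow_nonneg hρ0 k)
  have hCs0 : 0 ≤ Cs := tsum_nonneg hterm_nonneg
  have hden2 : (0:ℝ) < c₁ + 4*c₂ := by linarith
  refine ⟨(4/(c₁+4*c₂)) * (Cs + 1), mul_pos (div_pos four_pos hden2) (by linarith), ?_⟩
  intro K hK h hh G hGpd hGband hGspec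
  haveI : Nonempty (Fin K) := ⟨⟨0, hK⟩⟩
  set α : ℝ := 4/((c₁+4*c₂)*h) with hαdef
  have hne1 : h ≠ 0 := ne_of_gt hh
  have hne2 : c₁ + 4*c₂ ≠ 0 := ne_of_gt hden2
  have hα0 : 0 < α := by rw [hαdef]; exact div_pos four_pos (mul_pos hden2 hh)
  have hHerm : G.IsHermitian := hGpd.1
  set U : Matrix (Fin K) (Fin K) ℝ := (hHerm.eigenvectorUnitary : Matrix (Fin K) (Fin K) ℝ)
    with hUdef
  have hU1 : U * star U = 1 := (Matrix.mem_unitaryGroup_iff).mp hHerm.eigenvectorUnitary.2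
  set B : Matrix (Fin K) (Fin K) ℝ := 1 - α • G with hBdef
  -- eigenvalue bounds give |1 - α * λ| ≤ ρ
  have hf : ∀ l, |1 - α * hHerm.eigenvalues l| ≤ ρ := by
    intro l
    obtain ⟨h1, h2⟩ := hGspec _ (hHerm.eigenvalues_mem_spectrum_real l)
    have hm : α * (c₁ * h / 2) = 1 - ρ := by
      rw [hαdef, hρdef]; field_simp; ring
    have hM : α * (2 * c₂ * h) = 1 + ρ := by
      rw [hαdef, hρdef]; field_simp; ring
    have hlo : α * (c₁ * h / 2) ≤ α * hHerm.eigenvalues l :=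
      mul_le_mul_of_nonneg_left h1 hα0.le
    have hhi : α * hHerm.eigenvalues l ≤ α * (2 * c₂ * h) :=
      mul_le_mul_of_nonneg_left h2 hα0.le
    rw [abs_le]; constructor <;> [linarith [hM ▸ hhi]; linarith [hm ▸ hlo]]
  -- entry bound for powers of B
  have hentry : ∀ k : ℕ, ∀ i j : Fin K, |(B ^ k) i j| ≤ ρ ^ k := by
    intro k i j
    rw [hBdef, stmt7_pow_diag G hHerm α k]
    exact stmt7_entry_bound U hU1 _ (pow_nonneg hρ0 k)
      (fun l => by rw [abs_pow]; exact pow_le_pow_left₀ (abs_nonneg _) (hf l) k) i j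
  -- B is banded
  have hBband : ∀ i j : Fin K, (q:ℤ) ≤ |(i:ℤ) - (j:ℤ)| → B i j = 0 := by
    intro i j hij
    have hne : i ≠ j := by
      intro e; subst e; simp at hij; omega
    rw [hBdef]
    simp [Matrix.sub_apply, Matrix.one_apply_ne hne, hGband i j hij]
  have hpowband := stmt7_band hq B hBband
  -- row sums of powers of B
  have hrowB : ∀ k : ℕ, ∀ a : Fin K, ∑ j, |(B ^ k) a j| ≤ (2*(q:ℝ)*k+1)*ρ^k := by
    intro k a
    set S := Finset.univ.filter (fun j : Fin K => |(a:ℤ) - (j:ℤ)| ≤ ((k*(q-1):ℕ):ℤ)) with hSdef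
    have hsplit : ∑ j, |(B ^ k) a j| = ∑ j ∈ S, |(B ^ k) a j| := by
      symm
      apply Finset.sum_subset (Finset.filter_subset _ _)
      intro j _ hj
      simp only [hSdef, Finset.mem_filter, Finset.mem_univ, true_and, not_le] at hj
      rw [hpowband k a j hj, abs_zero]
    rw [hsplit]
    calc ∑ j ∈ S, |(B ^ k) a j| ≤ S.card • ρ^k :=
          Finset.sum_le_card_nsmul _ _ _ (fun j _ => hentry k a j)
      _ = (S.card : ℝ) * ρ^k := nsmul_eq_mul _ _
      _ ≤ (2*((k*(q-1):ℕ):ℝ)+1) * ρ^k := by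
          have := stmt7_card a (k*(q-1))
          exact mul_le_mul_of_nonneg_right this (pow_nonneg hρ0 k)
      _ ≤ (2*(q:ℝ)*k+1)*ρ^k := by
          have hnat : (k*(q-1) : ℕ) ≤ q*k := by
            calc k*(q-1) ≤ k*q := Nat.mul_le_mul_left k (Nat.sub_le q 1)
              _ = q*k := Nat.mul_comm k q
          have hcast : ((k*(q-1):ℕ):ℝ) ≤ (q:ℝ)*k := by exact_mod_cast hnat
          have : 2*((k*(q-1):ℕ):ℝ)+1 ≤ 2*(q:ℝ)*k+1 := by linarith
          exact mul_le_mul_of_nonneg_right this (pow_nonneg hρ0 k)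
  -- inverse identity
  have hdet : IsUnit G.det := isUnit_iff_ne_zero.mpr (ne_of_gt hGpd.det_pos)
  have hinv : G⁻¹ * G = 1 := Matrix.nonsing_inv_mul G hdet
  have hid : ∀ n : ℕ, G⁻¹ = α • (∑ k ∈ Finset.range n, B^k) + G⁻¹ * B^n := by
    intro n
    have h1 : (1 - B) * ∑ k ∈ Finset.range n, B^k = 1 - B^n := mul_neg_geom_sum B n
    have h2 : (1 : Matrix (Fin K) (Fin K) ℝ) - B = α • G := by
      rw [hBdef]; abel
    rw [h2] at h1
    have h3 : G * (α • ∑ k ∈ Finset.range n, B^k) = 1 - B^n := by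
      rw [Matrix.mul_smul, ← Matrix.smul_mul]; exact h1
    have h4 := congrArg (fun M => G⁻¹ * M) h3
    rw [← Matrix.mul_assoc, hinv, Matrix.one_mul, Matrix.mul_sub, Matrix.mul_one] at h4
    rw [h4]; abel
  -- per-row bound
  have hrowG : ∀ i : Fin K, ∑ j, |G⁻¹ i j| ≤ α * Cs := by
    intro i
    set R : ℝ := ∑ j, |G⁻¹ i j| with hRdef
    have hRn : ∀ n : ℕ, R ≤ α * Cs + R * ((2*(q:ℝ)*n+1)*ρ^n) := by
      intro n
      have hidn := hid n
      have hentryeq : ∀ j, G⁻¹ i j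
          = α * (∑ k ∈ Finset.range n, B^k) i j + (G⁻¹ * B^n) i j := by
        intro j
        have := congrFun (congrFun hidn i) j
        simpa [Matrix.add_apply, Matrix.smul_apply, smul_eq_mul] using this
      have hterm1 : ∑ j, |(∑ k ∈ Finset.range n, B^k) i j|
          ≤ ∑ k ∈ Finset.range n, (2*(q:ℝ)*k+1)*ρ^k := by
        calc ∑ j, |(∑ k ∈ Finset.range n, B^k) i j|
            = ∑ j, |∑ k ∈ Finset.range n, (B^k) i j| := by
              refine Finset.sum_congr rfl fun j _ => ?_
              congr 1
              exact Matrix.sum_apply i j _ _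
          _ ≤ ∑ j, ∑ k ∈ Finset.range n, |(B^k) i j| :=
              Finset.sum_le_sum fun j _ => Finset.abs_sum_le_sum_abs _ _
          _ = ∑ k ∈ Finset.range n, ∑ j, |(B^k) i j| := Finset.sum_comm
          _ ≤ ∑ k ∈ Finset.range n, (2*(q:ℝ)*k+1)*ρ^k :=
              Finset.sum_le_sum fun k _ => hrowB k i
      have hterm2 : ∑ j, |(G⁻¹ * B^n) i j| ≤ R * ((2*(q:ℝ)*n+1)*ρ^n) := by
        calc ∑ j, |(G⁻¹ * B^n) i j|
            ≤ ∑ j, ∑ l, |G⁻¹ i l| * |(B^n) l j| := by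
              refine Finset.sum_le_sum fun j _ => ?_
              rw [Matrix.mul_apply]
              refine le_trans (Finset.abs_sum_le_sum_abs _ _) ?_
              exact Finset.sum_le_sum fun l _ => le_of_eq (abs_mul _ _)
          _ = ∑ l, |G⁻¹ i l| * ∑ j, |(B^n) l j| := by
              rw [Finset.sum_comm]
              exact Finset.sum_congr rfl fun l _ => (Finset.mul_sum _ _ _).symm
          _ ≤ ∑ l, |G⁻¹ i l| * ((2*(q:ℝ)*n+1)*ρ^n) :=
              Finset.sum_le_sum fun l _ =>
                mul_le_mul_of_nonneg_left (hrowB n l) (abs_nonneg _)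
          _ = R * ((2*(q:ℝ)*n+1)*ρ^n) := by rw [hRdef, Finset.sum_mul]
      have hpartial : ∑ k ∈ Finset.range n, (2*(q:ℝ)*k+1)*ρ^k ≤ Cs :=
        Summable.sum_le_tsum _ (fun k _ => hterm_nonneg k) hSumm
      calc R = ∑ j, |α * (∑ k ∈ Finset.range n, B^k) i j + (G⁻¹ * B^n) i j| := by
            rw [hRdef]
            exact Finset.sum_congr rfl fun j _ => by rw [hentryeq j]
        _ ≤ ∑ j, (α * |(∑ k ∈ Finset.range n, B^k) i j| + |(G⁻¹ * B^n) i j|) := by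
            refine Finset.sum_le_sum fun j _ => ?_
            refine le_trans (abs_add_le _ _) ?_
            rw [abs_mul, abs_of_pos hα0]
        _ = α * (∑ j, |(∑ k ∈ Finset.range n, B^k) i j|) + ∑ j, |(G⁻¹ * B^n) i j| := by
            rw [Finset.sum_add_distrib, Finset.mul_sum]
        _ ≤ α * Cs + R * ((2*(q:ℝ)*n+1)*ρ^n) := by
            have := mul_le_mul_of_nonneg_left (le_trans hterm1 hpartial) hα0.le
            linarith [hterm2, this]
    have hlim : Filter.Tendsto (fun n : ℕ => α * Cs + R * ((2*(q:ℝ)*n+1)*ρ^n))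
        Filter.atTop (nhds (α * Cs)) := by
      have h0 : Filter.Tendsto (fun n : ℕ => (2*(q:ℝ)*n+1)*ρ^n) Filter.atTop (nhds 0) :=
        hSumm.tendsto_atTop_zero
      have := (h0.const_mul R).const_add (α * Cs)
      simpa using this
    exact ge_of_tendsto' hlim hRn
  -- conclude
  have hsup : rowSumNorm G⁻¹ ≤ α * Cs := ciSup_le hrowG
  refine le_trans hsup ?_
  have heq : (4/(c₁+4*c₂)) * (Cs + 1) * h⁻¹ = α * (Cs + 1) := by
    rw [hαdef]; field_simp
  rw [heq]
  have : Cs ≤ Cs + 1 := by linarith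
  exact mul_le_mul_of_nonneg_left this hα0.le
end

section
/- Let A be a K×K real matrix with A_{ij} = 0 whenever |i − j| ≥ q, with ‖A‖₂ ≤ 1, and suppose A is invertible with ‖A^{-1}‖₂ ≤ κ. Then there exist a constant c > 0 and γ ∈ (0,1), depending only on κ and q (and not on K or on A), such that |(A^{-1})_{ij}| ≤ c γ^{|i−j|} for all i, j. -/
open Matrix

set_option maxHeartbeats 1000000
set_option synthInstance.maxHeartbeats 400000

namespace DemkoAux

variable {K : ℕ}

lemma opNorm2_eq (A : Matrix (Fin K) (Fin K) ℝ) :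
    opNorm2 A = ‖Matrix.toEuclideanCLM (𝕜 := ℝ) A‖ := rfl

lemma opNorm2_nonneg (A : Matrix (Fin K) (Fin K) ℝ) : 0 ≤ opNorm2 A := norm_nonneg _

lemma opNorm2_mul_le (A B : Matrix (Fin K) (Fin K) ℝ) :
    opNorm2 (A * B) ≤ opNorm2 A * opNorm2 B := by
  simp only [opNorm2_eq, _root_.map_mul]; exact norm_mul_le _ _

lemma toEuclideanCLM_transpose (A : Matrix (Fin K) (Fin K) ℝ) :
    Matrix.toEuclideanCLM (𝕜 := ℝ) Aᵀ =
      ContinuousLinearMap.adjoint (Matrix.toEuclideanCLM (𝕜 := ℝ) A) := by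
  have h : Aᵀ = star A := by
    rw [Matrix.star_eq_conjTranspose, Matrix.conjTranspose_eq_transpose_of_trivial]
  rw [h, map_star, ContinuousLinearMap.star_eq_adjoint]

lemma opNorm2_transpose (A : Matrix (Fin K) (Fin K) ℝ) : opNorm2 Aᵀ = opNorm2 A := by
  rw [opNorm2_eq, toEuclideanCLM_transpose]
  exact ContinuousLinearMap.adjoint.norm_map _

lemma abs_apply_le_norm (x : EuclideanSpace ℝ (Fin K)) (i : Fin K) : |x i| ≤ ‖x‖ := by
  rw [EuclideanSpace.norm_eq, ← Real.sqrt_sq_eq_abs]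
  apply Real.sqrt_le_sqrt
  exact Finset.single_le_sum (f := fun j => ‖x j‖ ^ 2) (fun j _ => by positivity)
      (Finset.mem_univ i) |>.trans_eq' (by rw [Real.norm_eq_abs, sq_abs])

lemma abs_entry_le (A : Matrix (Fin K) (Fin K) ℝ) (i j : Fin K) :
    |A i j| ≤ opNorm2 A := by
  set f := Matrix.toEuclideanCLM (𝕜 := ℝ) A
  have hx : f (EuclideanSpace.single j 1) i = A i j := by
    have h1 : f (EuclideanSpace.single j 1) =
        (WithLp.equiv _ _).symm (Matrix.toLin' A (Pi.single j 1)) :=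
      Matrix.toEuclideanCLM_toLp A (Pi.single j 1)
    rw [h1]
    simp [Matrix.toLin'_apply, Matrix.mulVec_single]
  calc |A i j| = |f (EuclideanSpace.single j 1) i| := by rw [hx]
    _ ≤ ‖f (EuclideanSpace.single j 1)‖ := abs_apply_le_norm _ _
    _ ≤ ‖f‖ * ‖EuclideanSpace.single j (1:ℝ)‖ := f.le_opNorm _
    _ = opNorm2 A := by rw [EuclideanSpace.norm_single]; simp [opNorm2_eq]; rfl

lemma opNorm2_pow_le (B : Matrix (Fin K) (Fin K) ℝ) (k : ℕ) :
    opNorm2 (B ^ k) ≤ opNorm2 B ^ k := by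
  induction k with
  | zero =>
      rw [pow_zero, pow_zero, opNorm2_eq, _root_.map_one]
      simpa [ContinuousLinearMap.one_def] using
        (ContinuousLinearMap.norm_id_le (E := EuclideanSpace ℝ (Fin K)))
  | succ n ih =>
      calc opNorm2 (B ^ (n + 1)) = opNorm2 (B ^ n * B) := by rw [pow_succ]
        _ ≤ opNorm2 (B ^ n) * opNorm2 B := opNorm2_mul_le _ _
        _ ≤ opNorm2 B ^ n * opNorm2 B :=
            mul_le_mul_of_nonneg_right ih (opNorm2_nonneg _)
        _ = opNorm2 B ^ (n + 1) := (pow_succ _ _).symm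

/-- the key analytic estimate -/
lemma norm_one_sub_le (A : Matrix (Fin K) (Fin K) ℝ) (κ' : ℝ) (hκ : 1 ≤ κ')
    (hA1 : opNorm2 A ≤ 1) (hU : IsUnit A) (hinv : opNorm2 A⁻¹ ≤ κ') :
    opNorm2 (1 - A * Aᵀ) ≤ Real.sqrt (1 - 1 / (2 * κ' ^ 2)) := by
  have hκ0 : (0:ℝ) < κ' := lt_of_lt_of_le one_pos hκ
  have hr2 : (0:ℝ) ≤ 1 - 1 / (2 * κ' ^ 2) := by
    have : 1 / (2 * κ' ^ 2) ≤ 1 / 2 := by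
      apply div_le_div_of_nonneg_left one_pos.le (by norm_num)
      nlinarith
    linarith
  have hdet : IsUnit A.det := (Matrix.isUnit_iff_isUnit_det A).mp hU
  have hdetT : IsUnit Aᵀ.det := by rwa [Matrix.det_transpose]
  set f := Matrix.toEuclideanCLM (𝕜 := ℝ) A with hf
  set g := Matrix.toEuclideanCLM (𝕜 := ℝ) Aᵀ with hg
  have hadj : g = ContinuousLinearMap.adjoint f := toEuclideanCLM_transpose A
  have hnf : ‖f‖ ≤ 1 := hA1
  have hge : ∀ x : EuclideanSpace ℝ (Fin K), ‖x‖ ≤ κ' * ‖g x‖ := by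
    intro x
    have hid : (Aᵀ)⁻¹ * Aᵀ = 1 := Matrix.nonsing_inv_mul _ hdetT
    have hx : Matrix.toEuclideanCLM (𝕜 := ℝ) (Aᵀ)⁻¹ (g x) = x := by
      rw [hg, ← ContinuousLinearMap.mul_apply, ← _root_.map_mul, hid, _root_.map_one,
        ContinuousLinearMap.one_apply]
    have hnT : opNorm2 (Aᵀ)⁻¹ ≤ κ' := by
      rw [← Matrix.transpose_nonsing_inv, opNorm2_transpose]; exact hinv
    calc ‖x‖ = ‖Matrix.toEuclideanCLM (𝕜 := ℝ) (Aᵀ)⁻¹ (g x)‖ := by rw [hx]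
      _ ≤ ‖Matrix.toEuclideanCLM (𝕜 := ℝ) (Aᵀ)⁻¹‖ * ‖g x‖ :=
          ContinuousLinearMap.le_opNorm _ _
      _ ≤ κ' * ‖g x‖ := mul_le_mul_of_nonneg_right hnT (norm_nonneg _)
  rw [opNorm2_eq, map_sub, _root_.map_one, _root_.map_mul, ← hf, ← hg]
  apply ContinuousLinearMap.opNorm_le_bound _ (Real.sqrt_nonneg _)
  intro x
  have hx : (1 - f * g) x = x - f (g x) := by
    simp [ContinuousLinearMap.sub_apply, ContinuousLinearMap.mul_apply,
      ContinuousLinearMap.one_apply]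
  rw [hx]
  have e1 : ‖x - f (g x)‖ ^ 2 =
      ‖x‖ ^ 2 - 2 * inner ℝ x (f (g x)) + ‖f (g x)‖ ^ 2 := by
    rw [@norm_sub_sq_real]
  have e2 : (inner ℝ x (f (g x)) : ℝ) = ‖g x‖ ^ 2 := by
    have hfg : f = ContinuousLinearMap.adjoint g := by
      rw [hadj, ContinuousLinearMap.adjoint_adjoint]
    rw [hfg, ContinuousLinearMap.adjoint_inner_right, real_inner_self_eq_norm_sq]
  have e3 : ‖f (g x)‖ ≤ ‖g x‖ := by
    calc ‖f (g x)‖ ≤ ‖f‖ * ‖g x‖ := f.le_opNorm _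
      _ ≤ 1 * ‖g x‖ := mul_le_mul_of_nonneg_right hnf (norm_nonneg _)
      _ = ‖g x‖ := one_mul _
  have e4 : ‖x‖ ≤ κ' * ‖g x‖ := hge x
  have key : ‖x - f (g x)‖ ^ 2 ≤ (1 - 1 / (2 * κ' ^ 2)) * ‖x‖ ^ 2 := by
    have h5 : ‖x‖ ^ 2 ≤ κ' ^ 2 * ‖g x‖ ^ 2 := by nlinarith [norm_nonneg x, norm_nonneg (g x)]
    have h6 : ‖f (g x)‖ ^ 2 ≤ ‖g x‖ ^ 2 := by nlinarith [norm_nonneg (f (g x)), norm_nonneg (g x)]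
    rw [e1, e2]
    have h7 : (1 / κ' ^ 2) * ‖x‖ ^ 2 ≤ ‖g x‖ ^ 2 := by
      rw [div_mul_eq_mul_div, one_mul, div_le_iff₀ (by positivity)]
      nlinarith
    have h8 : 1 / (2 * κ' ^ 2) ≤ 1 / κ' ^ 2 := by
      apply div_le_div_of_nonneg_left one_pos.le (by positivity)
      nlinarith
    nlinarith [sq_nonneg ‖x‖]
  calc ‖x - f (g x)‖ = Real.sqrt (‖x - f (g x)‖ ^ 2) := (Real.sqrt_sq (norm_nonneg _)).symm
    _ ≤ Real.sqrt ((1 - 1 / (2 * κ' ^ 2)) * ‖x‖ ^ 2) := Real.sqrt_le_sqrt key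
    _ = Real.sqrt (1 - 1 / (2 * κ' ^ 2)) * ‖x‖ := by
        rw [Real.sqrt_mul hr2, Real.sqrt_sq (norm_nonneg _)]


variable {K : ℕ}

/-- banded matrices multiply -/
lemma band_mul (A B : Matrix (Fin K) (Fin K) ℝ) (b₁ b₂ : ℤ)
    (hA : ∀ i j : Fin K, b₁ ≤ |(i : ℤ) - (j : ℤ)| → A i j = 0)
    (hB : ∀ i j : Fin K, b₂ ≤ |(i : ℤ) - (j : ℤ)| → B i j = 0) :
    ∀ i j : Fin K, b₁ + b₂ - 1 ≤ |(i : ℤ) - (j : ℤ)| → (A * B) i j = 0 := by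
  intro i j hij
  rw [Matrix.mul_apply]
  apply Finset.sum_eq_zero
  intro m _
  by_cases h1 : b₁ ≤ |(i : ℤ) - (m : ℤ)|
  · rw [hA i m h1, zero_mul]
  · by_cases h2 : b₂ ≤ |(m : ℤ) - (j : ℤ)|
    · rw [hB m j h2, mul_zero]
    · push_neg at h1 h2
      have habs : |(i : ℤ) - (j : ℤ)| ≤ |(i : ℤ) - (m : ℤ)| + |(m : ℤ) - (j : ℤ)| :=
        abs_sub_le _ _ _
      omega

lemma band_mono (A : Matrix (Fin K) (Fin K) ℝ) (b b' : ℤ) (hbb : b ≤ b')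
    (hA : ∀ i j : Fin K, b ≤ |(i : ℤ) - (j : ℤ)| → A i j = 0) :
    ∀ i j : Fin K, b' ≤ |(i : ℤ) - (j : ℤ)| → A i j = 0 :=
  fun i j h => hA i j (le_trans hbb h)

lemma band_pow (B : Matrix (Fin K) (Fin K) ℝ) (b : ℤ)
    (hB : ∀ i j : Fin K, b ≤ |(i : ℤ) - (j : ℤ)| → B i j = 0) (k : ℕ) :
    ∀ i j : Fin K, (k : ℤ) * (b - 1) + 1 ≤ |(i : ℤ) - (j : ℤ)| → (B ^ k) i j = 0 := by
  induction k with
  | zero =>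
      intro i j hij
      rw [pow_zero]
      apply Matrix.one_apply_ne
      intro h
      rw [h] at hij
      simp at hij
  | succ n ih =>
      intro i j hij
      rw [pow_succ]
      refine band_mul _ _ ((n : ℤ) * (b - 1) + 1) b ih hB i j ?_
      have : ((n : ℤ) * (b - 1) + 1) + b - 1 = ((n + 1 : ℕ) : ℤ) * (b - 1) + 1 := by
        push_cast; ring
      omega

/-- Neumann remainder identity -/
lemma neumann (M : Matrix (Fin K) (Fin K) ℝ) (hM : IsUnit M.det) (N : ℕ) :
    M⁻¹ = (∑ k ∈ Finset.range N, (1 - M) ^ k) + (1 - M) ^ N * M⁻¹ := by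
  have hgeom : (∑ k ∈ Finset.range N, (1 - M) ^ k) * M = 1 - (1 - M) ^ N := by
    have h := geom_sum_mul (1 - M) N
    have h2 : (∑ k ∈ Finset.range N, (1 - M) ^ k) * ((1 - M) - 1) =
        -((∑ k ∈ Finset.range N, (1 - M) ^ k) * M) := by
      rw [sub_sub_cancel_left, mul_neg]
    rw [h2] at h
    linear_combination (norm := noncomm_ring) -h
  have hMM : M * M⁻¹ = 1 := Matrix.mul_nonsing_inv _ hM
  calc M⁻¹ = 1 * M⁻¹ := (one_mul _).symm
    _ = ((∑ k ∈ Finset.range N, (1 - M) ^ k) * M + (1 - M) ^ N) * M⁻¹ := by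
        rw [hgeom]; noncomm_ring
    _ = (∑ k ∈ Finset.range N, (1 - M) ^ k) * (M * M⁻¹) + (1 - M) ^ N * M⁻¹ := by
        noncomm_ring
    _ = _ := by rw [hMM, mul_one]

/-- entrywise decay for M⁻¹ -/
lemma minv_entry {K : ℕ} (M : Matrix (Fin K) (Fin K) ℝ) (hM : IsUnit M.det)
    (s' : ℕ) (hs' : 1 ≤ s')
    (hband : ∀ k : ℕ, ∀ i j : Fin K,
      ((k * s' : ℕ) : ℤ) + 1 ≤ |(i : ℤ) - (j : ℤ)| → ((1 - M) ^ k) i j = 0)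
    (r C : ℝ) (hr : opNorm2 (1 - M) ≤ r) (hr0 : 0 ≤ r) (hC : opNorm2 M⁻¹ ≤ C) :
    ∀ m j : Fin K, |M⁻¹ m j| ≤ r ^ (((m : ℤ) - (j : ℤ)).natAbs / s') * C := by
  intro m j
  set d : ℕ := ((m : ℤ) - (j : ℤ)).natAbs with hd
  set N : ℕ := d / s' with hN
  have habs : |(m : ℤ) - (j : ℤ)| = (d : ℤ) := Int.abs_eq_natAbs _
  have hrep := neumann M hM N
  have hzero : (∑ k ∈ Finset.range N, (1 - M) ^ k) m j = 0 := by
    rw [Matrix.sum_apply]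
    apply Finset.sum_eq_zero
    intro k hk
    rw [Finset.mem_range] at hk
    apply hband k m j
    rw [habs]
    have h1 : (k + 1) * s' ≤ d := (Nat.le_div_iff_mul_le (Nat.lt_of_lt_of_le Nat.zero_lt_one hs')).mp hk
    have : k * s' + 1 ≤ d := by nlinarith
    exact_mod_cast this
  have hent : M⁻¹ m j = ((1 - M) ^ N * M⁻¹) m j := by
    have h := congrFun (congrFun hrep m) j
    rw [Matrix.add_apply, hzero, zero_add] at h
    exact h
  rw [hent]
  calc |((1 - M) ^ N * M⁻¹) m j| ≤ opNorm2 ((1 - M) ^ N * M⁻¹) := abs_entry_le _ _ _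
    _ ≤ opNorm2 ((1 - M) ^ N) * opNorm2 M⁻¹ := opNorm2_mul_le _ _
    _ ≤ r ^ N * C := by
        apply mul_le_mul _ hC (opNorm2_nonneg _) (pow_nonneg hr0 _)
        exact (opNorm2_pow_le _ _).trans (pow_le_pow_left₀ (opNorm2_nonneg _) hr _)
end DemkoAux

/-- Demko's theorem: exponential entrywise decay of the inverse of a banded matrix,
with constants depending only on `κ` and the bandwidth `q`. -/


theorem stmt_8 (q : ℕ) (κ : ℝ) :
    ∃ c : ℝ, 0 < c ∧ ∃ γ : ℝ, γ ∈ Set.Ioo (0 : ℝ) 1 ∧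
      ∀ (K : ℕ) (A : Matrix (Fin K) (Fin K) ℝ),
        (∀ i j : Fin K, (q : ℤ) ≤ |(i : ℤ) - (j : ℤ)| → A i j = 0) →
        opNorm2 A ≤ 1 → IsUnit A → opNorm2 A⁻¹ ≤ κ →
        ∀ i j : Fin K, |A⁻¹ i j| ≤ c * γ ^ ((i : ℤ) - (j : ℤ)).natAbs := by
  classical
  set κ' : ℝ := max κ 1 with hκ'
  have hκ'1 : 1 ≤ κ' := le_max_right _ _
  have hκ'0 : 0 < κ' := lt_of_lt_of_le one_pos hκ'1
  have harg0 : 0 < 1 - 1 / (2 * κ' ^ 2) := by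
    have : 1 / (2 * κ' ^ 2) ≤ 1 / 2 := by
      apply div_le_div_of_nonneg_left one_pos.le (by norm_num)
      nlinarith
    linarith
  have harg1 : 1 - 1 / (2 * κ' ^ 2) < 1 := by
    have : 0 < 1 / (2 * κ' ^ 2) := by positivity
    linarith
  set r : ℝ := Real.sqrt (1 - 1 / (2 * κ' ^ 2)) with hrdef
  have hr0 : 0 < r := Real.sqrt_pos.mpr harg0
  have hr1 : r < 1 := by
    have h := Real.sq_sqrt harg0.le
    nlinarith [Real.sqrt_nonneg (1 - 1 / (2 * κ' ^ 2))]
  set s' : ℕ := max (2 * q - 2) 1 with hs'def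
  have hs'1 : 1 ≤ s' := le_max_right _ _
  have hs'0 : (s' : ℝ) ≠ 0 := by positivity
  set γ : ℝ := r ^ ((s' : ℝ)⁻¹) with hγdef
  have hγ0 : 0 < γ := Real.rpow_pos_of_pos hr0 _
  have hγ1 : γ < 1 := Real.rpow_lt_one hr0.le hr1 (by positivity)
  have hγs : γ ^ s' = r := by
    rw [hγdef, ← Real.rpow_natCast (r ^ ((s' : ℝ)⁻¹)) s', ← Real.rpow_mul hr0.le,
      inv_mul_cancel₀ hs'0, Real.rpow_one]
  refine ⟨(2 * q + 1 : ℝ) * κ' ^ 2 / γ ^ (s' + q), by positivity, γ, ⟨hγ0, hγ1⟩, ?_⟩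
  intro K A hband hA1 hU hinv
  have hinv' : opNorm2 A⁻¹ ≤ κ' := hinv.trans (le_max_left _ _)
  have hdet : IsUnit A.det := (Matrix.isUnit_iff_isUnit_det A).mp hU
  have hdetT : IsUnit Aᵀ.det := by rwa [Matrix.det_transpose]
  set M : Matrix (Fin K) (Fin K) ℝ := A * Aᵀ with hMdef
  have hMdet : IsUnit M.det := by
    rw [hMdef, Matrix.det_mul, Matrix.det_transpose]; exact hdet.mul hdet
  -- band structure
  have hbandT : ∀ i j : Fin K, (q : ℤ) ≤ |(i : ℤ) - (j : ℤ)| → Aᵀ i j = 0 := by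
    intro i j h
    rw [Matrix.transpose_apply]
    exact hband j i (by rwa [abs_sub_comm])
  have hbandM : ∀ i j : Fin K, (q : ℤ) + (q : ℤ) - 1 ≤ |(i : ℤ) - (j : ℤ)| → M i j = 0 :=
    DemkoAux.band_mul A Aᵀ q q hband hbandT
  have hb1M : ∀ i j : Fin K, ((s' : ℤ) + 1) ≤ |(i : ℤ) - (j : ℤ)| → (1 - M) i j = 0 := by
    intro i j h
    have hs2 : (2 * (q : ℤ) - 2) ≤ (s' : ℤ) := by
      have : 2 * q - 2 ≤ s' := le_max_left _ _
      omega
    have hij : i ≠ j := by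
      intro he; rw [he] at h; simp at h; omega
    rw [Matrix.sub_apply, Matrix.one_apply_ne hij, hbandM i j (by omega), sub_zero]
  have hbandPow : ∀ k : ℕ, ∀ i j : Fin K,
      ((k * s' : ℕ) : ℤ) + 1 ≤ |(i : ℤ) - (j : ℤ)| → ((1 - M) ^ k) i j = 0 := by
    intro k i j h
    apply DemkoAux.band_pow (1 - M) ((s' : ℤ) + 1) hb1M k i j
    have : ((k * s' : ℕ) : ℤ) = (k : ℤ) * ((s' : ℤ) + 1 - 1) := by push_cast; ring
    omega
  -- norms
  have hIM : opNorm2 (1 - M) ≤ r := DemkoAux.norm_one_sub_le A κ' hκ'1 hA1 hU hinv'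
  have hMinvN : opNorm2 M⁻¹ ≤ κ' ^ 2 := by
    have h1 : M⁻¹ = (A⁻¹)ᵀ * A⁻¹ := by
      rw [hMdef, Matrix.mul_inv_rev, Matrix.transpose_nonsing_inv]
    rw [h1]
    calc opNorm2 ((A⁻¹)ᵀ * A⁻¹) ≤ opNorm2 (A⁻¹)ᵀ * opNorm2 A⁻¹ :=
          DemkoAux.opNorm2_mul_le _ _
      _ = opNorm2 A⁻¹ * opNorm2 A⁻¹ := by rw [DemkoAux.opNorm2_transpose]
      _ ≤ κ' * κ' := mul_le_mul hinv' hinv' (DemkoAux.opNorm2_nonneg _) hκ'0.le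
      _ = κ' ^ 2 := (sq κ').symm
  have hMent : ∀ m j : Fin K,
      |M⁻¹ m j| ≤ κ' ^ 2 / γ ^ s' * γ ^ ((m : ℤ) - (j : ℤ)).natAbs := by
    intro m j
    have h := DemkoAux.minv_entry M hMdet s' hs'1 hbandPow r (κ' ^ 2) hIM hr0.le hMinvN m j
    refine h.trans ?_
    set dmj : ℕ := ((m : ℤ) - (j : ℤ)).natAbs
    set N : ℕ := dmj / s'
    have hrN : r ^ N ≤ γ ^ dmj / γ ^ s' := by
      rw [le_div_iff₀ (by positivity), ← hγs, ← pow_mul, ← pow_add]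
      apply pow_le_pow_of_le_one hγ0.le hγ1.le
      conv_lhs => rw [← Nat.div_add_mod dmj s']
      exact Nat.add_le_add_left (Nat.mod_lt dmj (Nat.lt_of_lt_of_le Nat.zero_lt_one hs'1)).le _
    calc r ^ N * κ' ^ 2 ≤ (γ ^ dmj / γ ^ s') * κ' ^ 2 :=
          mul_le_mul_of_nonneg_right hrN (by positivity)
      _ = κ' ^ 2 / γ ^ s' * γ ^ dmj := by ring
  -- final assembly
  have hAinv : A⁻¹ = Aᵀ * M⁻¹ := by
    rw [hMdef, Matrix.mul_inv_rev, ← mul_assoc, Matrix.mul_nonsing_inv Aᵀ hdetT, one_mul]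
  intro i j
  set d : ℕ := ((i : ℤ) - (j : ℤ)).natAbs with hddef
  set B₀ : ℝ := κ' ^ 2 / γ ^ s' * (γ ^ d / γ ^ q) with hB₀
  have hB₀0 : 0 ≤ B₀ := by positivity
  have hterm : ∀ m : Fin K, |Aᵀ i m * M⁻¹ m j| ≤
      (if |(m : ℤ) - (i : ℤ)| < (q : ℤ) then B₀ else 0) := by
    intro m
    by_cases hm : |(m : ℤ) - (i : ℤ)| < (q : ℤ)
    · rw [if_pos hm]
      have h1 : |Aᵀ i m| ≤ 1 := (DemkoAux.abs_entry_le Aᵀ i m).trans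
        (by rwa [DemkoAux.opNorm2_transpose])
      have h2 : |M⁻¹ m j| ≤ κ' ^ 2 / γ ^ s' * γ ^ ((m : ℤ) - (j : ℤ)).natAbs := hMent m j
      have h3 : γ ^ ((m : ℤ) - (j : ℤ)).natAbs ≤ γ ^ d / γ ^ q := by
        rw [le_div_iff₀ (by positivity), ← pow_add]
        apply pow_le_pow_of_le_one hγ0.le hγ1.le
        have habs : |(i : ℤ) - (j : ℤ)| ≤ |(i : ℤ) - (m : ℤ)| + |(m : ℤ) - (j : ℤ)| :=
          abs_sub_le _ _ _
        have h5 : |(i : ℤ) - (m : ℤ)| = |(m : ℤ) - (i : ℤ)| := abs_sub_comm _ _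
        have h6 : ((d : ℤ)) = |(i : ℤ) - (j : ℤ)| := (Int.abs_eq_natAbs _).symm
        have h7 : ((((m : ℤ) - (j : ℤ)).natAbs : ℤ)) = |(m : ℤ) - (j : ℤ)| :=
          (Int.abs_eq_natAbs _).symm
        omega
      calc |Aᵀ i m * M⁻¹ m j| = |Aᵀ i m| * |M⁻¹ m j| := abs_mul _ _
        _ ≤ 1 * (κ' ^ 2 / γ ^ s' * γ ^ ((m : ℤ) - (j : ℤ)).natAbs) :=
            mul_le_mul h1 h2 (abs_nonneg _) one_pos.le
        _ = κ' ^ 2 / γ ^ s' * γ ^ ((m : ℤ) - (j : ℤ)).natAbs := one_mul _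
        _ ≤ B₀ := by
            rw [hB₀]
            exact mul_le_mul_of_nonneg_left h3 (by positivity)
    · rw [if_neg hm]
      push_neg at hm
      have : Aᵀ i m = 0 := by
        rw [Matrix.transpose_apply]
        exact hband m i hm
      rw [this, zero_mul, abs_zero]
  have hcard : (Finset.univ.filter
      (fun m : Fin K => |(m : ℤ) - (i : ℤ)| < (q : ℤ))).card ≤ 2 * q + 1 := by
    have hinj : ∀ m ∈ Finset.univ.filter
        (fun m : Fin K => |(m : ℤ) - (i : ℤ)| < (q : ℤ)),
        ((m : ℤ)) ∈ Finset.Icc ((i : ℤ) - q) ((i : ℤ) + q) := by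
      intro m hm
      rw [Finset.mem_filter] at hm
      rw [Finset.mem_Icc]
      have := hm.2
      rw [abs_lt] at this
      omega
    have hcard2 := Finset.card_le_card_of_injOn
      (f := fun m : Fin K => ((m : ℕ) : ℤ)) hinj
      (fun a _ b _ hab => by
        have hab' : ((a : ℕ) : ℤ) = ((b : ℕ) : ℤ) := hab
        exact Fin.ext (by exact_mod_cast hab'))
    have : (Finset.Icc ((i : ℤ) - q) ((i : ℤ) + q)).card = 2 * q + 1 := by
      rw [Int.card_Icc]
      omega
    omega
  calc |A⁻¹ i j| = |∑ m, Aᵀ i m * M⁻¹ m j| := by rw [hAinv, Matrix.mul_apply]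
    _ ≤ ∑ m, |Aᵀ i m * M⁻¹ m j| := Finset.abs_sum_le_sum_abs _ _
    _ ≤ ∑ m : Fin K, (if |(m : ℤ) - (i : ℤ)| < (q : ℤ) then B₀ else 0) :=
        Finset.sum_le_sum (fun m _ => hterm m)
    _ = (Finset.univ.filter
        (fun m : Fin K => |(m : ℤ) - (i : ℤ)| < (q : ℤ))).card • B₀ := by
        rw [← Finset.sum_filter, Finset.sum_const]
    _ ≤ (2 * q + 1 : ℕ) • B₀ := by
        exact nsmul_le_nsmul_left hB₀0 hcard
    _ = ((2 * q + 1 : ℕ) : ℝ) * B₀ := by rw [nsmul_eq_mul]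
    _ = (2 * q + 1 : ℝ) * κ' ^ 2 / γ ^ (s' + q) * γ ^ d := by
        rw [hB₀, pow_add]
        have hγsne : (γ : ℝ) ^ s' ≠ 0 := by positivity
        have hγqne : (γ : ℝ) ^ q ≠ 0 := by positivity
        push_cast
        field_simp
end
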